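/- arXiv:1012.0671 — 2 statements merged into one kernel-verified Lean document; each statement's English description precedes it below -/
import Mathlib

section
/- Fix an integer t ≥ 2. A positive integer n is a champion of the function x ↦ Ψ_t(x)/x (meaning Ψ_t(m)/m ≤ Ψ_t(n)/n for every integer m with 1 ≤ m ≤ n) if and only if n is a multiple of the largest primorial number N_k satisfying N_k ≤ n. In particular the primorial numbers and their multiples are exactly the champion numbers of x ↦ Ψ_t(x)/x. -/
open Finset Filter

/-- Generalized Dedekind psi function `Ψ_t(n) = n ∏_{p ∣ n} (1 + 1/p + ⋯ + 1/p^(t-1))`. -/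
noncomputable def Psi (t n : ℕ) : ℝ :=
  (n : ℝ) * ∏ p ∈ n.primeFactors, ∑ i ∈ Finset.range t, (1 : ℝ) / (p : ℝ) ^ i

/-- The primorial `N_n = ∏_{k=1}^n p_k`, the product of the first `n` primes. -/
noncomputable def primorialAt (n : ℕ) : ℕ := ∏ k ∈ Finset.range n, Nat.nth Nat.Prime k

/-- The `n`-th prime `p_n` (so `nthPrime 1 = 2`). -/
noncomputable def nthPrime (n : ℕ) : ℕ := Nat.nth Nat.Prime (n - 1)

/-- The ratio `R_t(x) = Ψ_t(x) / (x log log x)`. -/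
noncomputable def Rt (t n : ℕ) : ℝ := Psi t n / ((n : ℝ) * Real.log (Real.log n))

/-- The Riemann zeta value `ζ(t) = ∑_{n ≥ 1} n^{-t}` at an integer argument. -/
noncomputable def zetaNat (t : ℕ) : ℝ := ∑' k : ℕ, 1 / ((k : ℝ) + 1) ^ t


/-! With `f(p) = 1 + 1/p + ⋯ + 1/p^(t-1)` we have `Ψ_t(m)/m = ∏_{p ∣ m} f(p)`, and for `t ≥ 2`
each factor exceeds `1` and `f` is strictly decreasing. Since the `i`-th smallest prime factor of
`m` is at least the `i`-th prime, among all `m` with at most `k` prime factors (in particular all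
`m < N_{k+1}`) the product attains its maximum exactly when the prime factors of `m` are the
first `k` primes. Hence if `N_k ≤ n < N_{k+1}`, the maximum of `Ψ_t(m)/m` over `m ≤ n` is attained
at `N_k`, and it is attained at `n` iff `rad n = N_k`, i.e. iff `N_k ∣ n`. -/

noncomputable def psiFactor (t p : ℕ) : ℝ := ∑ i ∈ range t, (1 : ℝ) / (p : ℝ) ^ i

section psiFactor

variable {t m p q : ℕ}

lemma psiFactor_nonneg (t p : ℕ) : 0 ≤ psiFactor t p :=
  sum_nonneg fun _ _ => by positivity

lemma one_lt_psiFactor (ht : 2 ≤ t) (hp : 0 < p) : 1 < psiFactor t p := by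
  have hsub : range 2 ⊆ range t := range_subset_range.2 ht
  calc (1 : ℝ) < ∑ i ∈ range 2, (1 : ℝ) / (p : ℝ) ^ i := by
        simpa [sum_range_succ] using (by positivity : (0 : ℝ) < 1 / p)
    _ ≤ psiFactor t p := sum_le_sum_of_subset_of_nonneg hsub fun _ _ _ => by positivity

lemma psiFactor_pos (ht : 2 ≤ t) (hp : 0 < p) : 0 < psiFactor t p :=
  one_pos.trans (one_lt_psiFactor ht hp)

lemma psiFactor_le_psiFactor (hp : 0 < p) (hpq : p ≤ q) : psiFactor t q ≤ psiFactor t p :=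
  sum_le_sum fun i _ => one_div_le_one_div_of_le (by positivity) (by gcongr)

lemma psiFactor_lt_psiFactor (ht : 2 ≤ t) (hp : 0 < p) (hpq : p < q) :
    psiFactor t q < psiFactor t p := by
  refine sum_lt_sum (fun i _ => one_div_le_one_div_of_le (by positivity) (by gcongr))
    ⟨1, mem_range.2 ht, ?_⟩
  have hpq' : (p : ℝ) < q := by exact_mod_cast hpq
  simpa using one_div_lt_one_div_of_lt (by positivity) hpq'

lemma Psi_div_self (hm : m ≠ 0) : Psi t m / (m : ℝ) = ∏ p ∈ m.primeFactors, psiFactor t p := by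
  rw [Psi, mul_div_cancel_left₀ _ (Nat.cast_ne_zero.2 hm)]
  rfl

end psiFactor

noncomputable def firstPrimes (k : ℕ) : Finset ℕ := (range k).image (Nat.nth Nat.Prime)

lemma prod_firstPrimes {M : Type*} [CommMonoid M] (g : ℕ → M) (k : ℕ) :
    ∏ p ∈ firstPrimes k, g p = ∏ j ∈ range k, g (Nat.nth Nat.Prime j) :=
  prod_image fun _ _ _ _ h => Nat.nth_injective Nat.infinite_setOfPred_prime h

lemma card_firstPrimes (k : ℕ) : #(firstPrimes k) = k := by
  rw [firstPrimes, card_image_of_injective _ (Nat.nth_injective Nat.infinite_setOfPred_prime),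
    card_range]

section OrderedPrimes

variable {S : Finset ℕ}

lemma nth_prime_le_orderEmbOfFin (hS : ∀ p ∈ S, p.Prime) (i : Fin #S) :
    Nat.nth Nat.Prime i ≤ S.orderEmbOfFin rfl i := by
  set e := S.orderEmbOfFin rfl
  have hsub : (Iic i).map e.toEmbedding ⊆ {q ∈ range (e i + 1) | q.Prime} := by
    intro q hq
    obtain ⟨j, hj, rfl⟩ := mem_map.1 hq
    exact mem_filter.2 ⟨mem_range.2 (Nat.lt_succ_of_le (e.monotone (mem_Iic.1 hj))),
      hS _ (S.orderEmbOfFin_mem rfl j)⟩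
  have hcount : (i : ℕ) < Nat.count Nat.Prime (e i + 1) := by
    rw [Nat.count_eq_card_filter_range]
    calc (i : ℕ) < #(Iic i) := by rw [Fin.card_Iic]; omega
      _ = #((Iic i).map e.toEmbedding) := (card_map _).symm
      _ ≤ _ := card_le_card hsub
  exact Nat.le_of_lt_succ (Nat.nth_lt_of_lt_count hcount)

lemma prod_eq_prod_orderEmbOfFin {M : Type*} [CommMonoid M] (S : Finset ℕ) (g : ℕ → M) :
    ∏ p ∈ S, g p = ∏ i : Fin #S, g (S.orderEmbOfFin rfl i) := by
  conv_lhs => rw [← S.map_orderEmbOfFin_univ rfl]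
  exact prod_map _ _ _

lemma eq_firstPrimes_of_forall_orderEmbOfFin_eq
    (h : ∀ i : Fin #S, S.orderEmbOfFin rfl i = Nat.nth Nat.Prime i) : S = firstPrimes #S := by
  refine eq_of_superset_of_card_ge (fun q hq => ?_) (card_firstPrimes _).ge
  obtain ⟨j, hj, rfl⟩ := mem_image.1 hq
  rw [← h ⟨j, mem_range.1 hj⟩]
  exact S.orderEmbOfFin_mem rfl _

lemma primorialAt_card_le_prod (hS : ∀ p ∈ S, p.Prime) : primorialAt #S ≤ ∏ p ∈ S, p := by
  rw [primorialAt, ← Fin.prod_univ_eq_prod_range, prod_eq_prod_orderEmbOfFin S fun p => p]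
  exact prod_le_prod' fun i _ => nth_prime_le_orderEmbOfFin hS i

lemma prod_psiFactor_le (t : ℕ) (hS : ∀ p ∈ S, p.Prime) :
    ∏ p ∈ S, psiFactor t p ≤ ∏ j ∈ range #S, psiFactor t (Nat.nth Nat.Prime j) := by
  rw [← Fin.prod_univ_eq_prod_range, prod_eq_prod_orderEmbOfFin S]
  exact prod_le_prod (fun _ _ => psiFactor_nonneg _ _) fun i _ =>
    psiFactor_le_psiFactor (Nat.prime_nth_prime i).pos (nth_prime_le_orderEmbOfFin hS i)

lemma prod_psiFactor_lt {t : ℕ} (ht : 2 ≤ t) (hS : ∀ p ∈ S, p.Prime) (hne : S ≠ firstPrimes #S) :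
    ∏ p ∈ S, psiFactor t p < ∏ j ∈ range #S, psiFactor t (Nat.nth Nat.Prime j) := by
  obtain ⟨i, hi⟩ : ∃ i : Fin #S, S.orderEmbOfFin rfl i ≠ Nat.nth Nat.Prime i := by
    by_contra! h
    exact hne (eq_firstPrimes_of_forall_orderEmbOfFin_eq h)
  have hle := nth_prime_le_orderEmbOfFin hS
  rw [← Fin.prod_univ_eq_prod_range, prod_eq_prod_orderEmbOfFin S]
  refine prod_lt_prod (fun j _ => psiFactor_pos ht (hS _ (S.orderEmbOfFin_mem rfl j)).pos)
    (fun j _ => psiFactor_le_psiFactor (Nat.prime_nth_prime j).pos (hle j))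
    ⟨i, mem_univ _, psiFactor_lt_psiFactor ht (Nat.prime_nth_prime i).pos ?_⟩
  exact (hle i).lt_of_ne' hi

end OrderedPrimes

lemma strictMono_prod_psiFactor_nth_prime {t : ℕ} (ht : 2 ≤ t) :
    StrictMono fun k => ∏ j ∈ range k, psiFactor t (Nat.nth Nat.Prime j) := by
  refine strictMono_nat_of_lt_succ fun k => ?_
  rw [prod_range_succ]
  exact lt_mul_of_one_lt_right
    (prod_pos fun j _ => psiFactor_pos ht (Nat.prime_nth_prime j).pos)
    (one_lt_psiFactor ht (Nat.prime_nth_prime k).pos)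

lemma primorialAt_eq_prod_firstPrimes (k : ℕ) : primorialAt k = ∏ p ∈ firstPrimes k, p :=
  (prod_firstPrimes (fun p => p) k).symm

lemma primeFactors_primorialAt (k : ℕ) : (primorialAt k).primeFactors = firstPrimes k := by
  rw [primorialAt_eq_prod_firstPrimes]
  refine Nat.primeFactors_prod fun p hp => ?_
  obtain ⟨j, -, rfl⟩ := mem_image.1 hp
  exact Nat.prime_nth_prime j

lemma primorialAt_pos (k : ℕ) : 0 < primorialAt k :=
  prod_pos fun j _ => (Nat.prime_nth_prime j).pos

lemma primorialAt_succ (k : ℕ) : primorialAt (k + 1) = primorialAt k * Nat.nth Nat.Prime k :=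
  prod_range_succ _ _

lemma primorialAt_strictMono : StrictMono primorialAt :=
  strictMono_nat_of_lt_succ fun k => by
    rw [primorialAt_succ]
    exact lt_mul_of_one_lt_right (primorialAt_pos k) (Nat.prime_nth_prime k).one_lt

lemma exists_primorialAt_le_lt {n : ℕ} (hn : 1 ≤ n) :
    ∃ k, primorialAt k ≤ n ∧ n < primorialAt (k + 1) := by
  have hex : ∃ k, n < primorialAt (k + 1) :=
    ⟨n, (primorialAt_strictMono.id_le n).trans_lt (primorialAt_strictMono n.lt_succ_self)⟩
  refine ⟨Nat.find hex, ?_, Nat.find_spec hex⟩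
  rcases h : Nat.find hex with _ | j
  · simpa [primorialAt] using hn
  · exact not_lt.1 (Nat.find_min hex (h ▸ j.lt_succ_self))

lemma card_primeFactors_le_of_lt_primorialAt {m k : ℕ} (hm : m ≠ 0)
    (hlt : m < primorialAt (k + 1)) : #m.primeFactors ≤ k := by
  by_contra! hk
  refine lt_irrefl m ?_
  calc m < primorialAt (k + 1) := hlt
    _ ≤ primorialAt #m.primeFactors := primorialAt_strictMono.monotone hk
    _ ≤ ∏ p ∈ m.primeFactors, p :=
      primorialAt_card_le_prod fun p hp => Nat.prime_of_mem_primeFactors hp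
    _ ≤ m := Nat.le_of_dvd (Nat.pos_of_ne_zero hm) (Nat.prod_primeFactors_dvd m)

lemma primeFactors_eq_of_primorialAt_dvd {n k : ℕ} (hn : n ≠ 0) (hdvd : primorialAt k ∣ n)
    (hlt : n < primorialAt (k + 1)) : n.primeFactors = (primorialAt k).primeFactors := by
  refine eq_of_superset_of_card_ge (Nat.primeFactors_mono hdvd hn) ?_
  rw [primeFactors_primorialAt, card_firstPrimes]
  exact card_primeFactors_le_of_lt_primorialAt hn hlt

lemma primorialAt_dvd_of_primeFactors_eq {n k : ℕ}
    (h : n.primeFactors = (primorialAt k).primeFactors) : primorialAt k ∣ n := by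
  rw [primorialAt_eq_prod_firstPrimes, ← primeFactors_primorialAt, ← h]
  exact Nat.prod_primeFactors_dvd n

section PsiDiv

variable {t m k : ℕ}

lemma Psi_div_primorialAt (t k : ℕ) :
    Psi t (primorialAt k) / (primorialAt k : ℝ) =
      ∏ j ∈ range k, psiFactor t (Nat.nth Nat.Prime j) := by
  rw [Psi_div_self (primorialAt_pos k).ne', primeFactors_primorialAt, prod_firstPrimes]

lemma Psi_div_le_of_lt_primorialAt (ht : 2 ≤ t) (hm : m ≠ 0) (hlt : m < primorialAt (k + 1)) :
    Psi t m / (m : ℝ) ≤ Psi t (primorialAt k) / (primorialAt k : ℝ) := by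
  rw [Psi_div_self hm, Psi_div_primorialAt]
  exact (prod_psiFactor_le t fun p hp => Nat.prime_of_mem_primeFactors hp).trans
    ((strictMono_prod_psiFactor_nth_prime ht).monotone
      (card_primeFactors_le_of_lt_primorialAt hm hlt))

lemma Psi_div_lt_of_lt_primorialAt (ht : 2 ≤ t) (hm : m ≠ 0) (hlt : m < primorialAt (k + 1))
    (hne : m.primeFactors ≠ (primorialAt k).primeFactors) :
    Psi t m / (m : ℝ) < Psi t (primorialAt k) / (primorialAt k : ℝ) := by
  have hprime : ∀ p ∈ m.primeFactors, p.Prime := fun p hp => Nat.prime_of_mem_primeFactors hp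
  rw [Psi_div_self hm, Psi_div_primorialAt]
  rcases (card_primeFactors_le_of_lt_primorialAt hm hlt).lt_or_eq with hcard | hcard
  · exact (prod_psiFactor_le t hprime).trans_lt (strictMono_prod_psiFactor_nth_prime ht hcard)
  · rw [primeFactors_primorialAt, ← hcard] at hne
    exact hcard ▸ prod_psiFactor_lt ht hprime hne

end PsiDiv

theorem champion_iff_multiple_of_largest_primorial (t : ℕ) (ht : 2 ≤ t) (n : ℕ) (hn : 1 ≤ n) :
    (∀ m : ℕ, 1 ≤ m → m ≤ n → Psi t m / (m : ℝ) ≤ Psi t n / (n : ℝ)) ↔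
      ∃ k : ℕ, primorialAt k ≤ n ∧ n < primorialAt (k + 1) ∧ primorialAt k ∣ n := by
  have hn0 : n ≠ 0 := Nat.one_le_iff_ne_zero.1 hn
  constructor
  · intro hchamp
    obtain ⟨k, hle, hlt⟩ := exists_primorialAt_le_lt hn
    refine ⟨k, hle, hlt, primorialAt_dvd_of_primeFactors_eq ?_⟩
    by_contra hne
    exact (Psi_div_lt_of_lt_primorialAt ht hn0 hlt hne).not_ge
      (hchamp _ (primorialAt_pos k) hle)
  · rintro ⟨k, -, hlt, hdvd⟩ m hm hmn
    rw [Psi_div_self hn0, primeFactors_eq_of_primorialAt_dvd hn0 hdvd hlt,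
      ← Psi_div_self (primorialAt_pos k).ne']
    exact Psi_div_le_of_lt_primorialAt ht (Nat.one_le_iff_ne_zero.1 hm) (hmn.trans_lt hlt)
end

section
/- Fix an integer t ≥ 2 and let n ≥ 2. Then ∏_{p prime, p > p_n} (1 − 1/p^t)^{-1} ≤ exp(2/p_n), where p_n denotes the n-th prime and the product on the left is the (convergent) infinite product over all primes exceeding p_n. -/
open Finset Filter

/-! Since `log (1 - x)⁻¹ ≤ 2x` for `0 ≤ x ≤ 1/2`, the tail product is at most
`exp (2 ∑_{p > p_n} p^{-t})`, and `p^{-t} ≤ p^{-2} ≤ 1/(p-1) - 1/p` telescopes to at most `1/p_n`. -/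

open Real

lemma Real.log_inv_one_sub_le_two_mul {x : ℝ} (hx₀ : 0 ≤ x) (hx : x ≤ 1 / 2) :
    log (1 - x)⁻¹ ≤ 2 * x := by
  have hpos : 0 < 1 - x := by linarith
  calc log (1 - x)⁻¹ ≤ (1 - x)⁻¹ - 1 := log_le_sub_one_of_pos (inv_pos.2 hpos)
    _ ≤ 2 * x := by
      rw [sub_le_iff_le_add, inv_le_iff_one_le_mul₀ hpos]
      nlinarith

lemma Real.tprod_inv_one_sub_le_exp {ι : Type*} {f : ι → ℝ} (hf₀ : ∀ i, 0 ≤ f i)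
    (hf : ∀ i, f i ≤ 1 / 2) (hsum : Summable f) :
    ∏' i, (1 - f i)⁻¹ ≤ exp (2 * ∑' i, f i) := by
  have hlog_le i : log (1 - f i)⁻¹ ≤ 2 * f i := log_inv_one_sub_le_two_mul (hf₀ i) (hf i)
  have hlog_nonneg i : 0 ≤ log (1 - f i)⁻¹ :=
    log_nonneg (one_le_inv₀ (by linarith [hf i]) |>.2 (by linarith [hf₀ i]))
  have hlog_sum : Summable fun i ↦ log (1 - f i)⁻¹ :=
    .of_nonneg_of_le hlog_nonneg hlog_le (hsum.mul_left 2)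
  rw [← rexp_tsum_eq_tprod (fun i ↦ inv_pos.2 (by linarith [hf i])) hlog_sum, exp_le_exp,
    ← tsum_mul_left]
  exact hlog_sum.tsum_le_tsum hlog_le (hsum.mul_left 2)

lemma one_div_pow_le_inv_sq {x : ℝ} (hx : 1 ≤ x) {t : ℕ} (ht : 2 ≤ t) :
    1 / x ^ t ≤ (x ^ 2)⁻¹ := by
  rw [one_div]
  exact inv_anti₀ (by positivity) (pow_le_pow_right₀ hx ht)

lemma inv_sq_le_one_div_four {x : ℝ} (hx : 2 ≤ x) : (x ^ 2)⁻¹ ≤ 1 / 4 := by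
  rw [one_div]
  exact inv_anti₀ (by norm_num) (by nlinarith)

lemma tsum_inv_sq_le_of_forall_lt {k : ℕ} (hk : k ≠ 0) {s : Set ℕ} (hs : ∀ p ∈ s, k < p) :
    ∑' p : s, ((p : ℝ) ^ 2)⁻¹ ≤ (k : ℝ)⁻¹ := by
  refine tsum_le_of_sum_le' (by positivity) fun F ↦ ?_
  set N := max k (F.sup Subtype.val)
  have hF : F.map (Function.Embedding.subtype _) ⊆ Finset.Ioc k N := by
    simp only [Finset.subset_iff, Finset.mem_map, Function.Embedding.subtype_apply,
      Finset.mem_Ioc, forall_exists_index, and_imp]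
    rintro _ p hp rfl
    exact ⟨hs p p.2, le_max_of_le_right (Finset.le_sup (f := Subtype.val) hp)⟩
  calc ∑ p ∈ F, ((p : ℝ) ^ 2)⁻¹
      = ∑ p ∈ F.map (Function.Embedding.subtype _), ((p : ℝ) ^ 2)⁻¹ := by
        rw [Finset.sum_map]; rfl
    _ ≤ ∑ p ∈ Finset.Ioc k N, ((p : ℝ) ^ 2)⁻¹ :=
        Finset.sum_le_sum_of_subset_of_nonneg hF fun _ _ _ ↦ by positivity
    _ ≤ (k : ℝ)⁻¹ - (N : ℝ)⁻¹ := sum_Ioc_inv_sq_le_sub hk (le_max_left _ _)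
    _ ≤ (k : ℝ)⁻¹ := sub_le_self _ (by positivity)

theorem tail_euler_product_le_general (t n : ℕ) (ht : 2 ≤ t) :
    ∏' p : {p : ℕ // p.Prime ∧ nthPrime n < p}, (1 - 1 / ((p : ℕ) : ℝ) ^ t)⁻¹ ≤
      Real.exp (2 / (nthPrime n : ℝ)) := by
  set k := nthPrime n
  have hk : k ≠ 0 := (Nat.prime_nth_prime (n - 1)).ne_zero
  have hle_sq (p : ℕ) (hp : p.Prime) : 1 / (p : ℝ) ^ t ≤ ((p : ℝ) ^ 2)⁻¹ :=
    one_div_pow_le_inv_sq (by exact_mod_cast hp.one_le) ht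
  have hsq_le (p : ℕ) (hp : p.Prime) : ((p : ℝ) ^ 2)⁻¹ ≤ 1 / 2 :=
    (inv_sq_le_one_div_four (by exact_mod_cast hp.two_le)).trans (by norm_num)
  have hsum : Summable fun p : {p : ℕ // p.Prime ∧ k < p} ↦ 1 / ((p : ℕ) : ℝ) ^ t :=
    (Real.summable_one_div_nat_pow.2 (by omega)).comp_injective Subtype.val_injective
  have htail : ∑' p : {p : ℕ // p.Prime ∧ k < p}, 1 / ((p : ℕ) : ℝ) ^ t ≤ (k : ℝ)⁻¹ :=
    calc _ ≤ ∑' p : {p : ℕ // p.Prime ∧ k < p}, (((p : ℕ) : ℝ) ^ 2)⁻¹ :=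
          hsum.tsum_le_tsum (fun p ↦ hle_sq p p.2.1) <|
            (Real.summable_nat_pow_inv.2 one_lt_two).comp_injective Subtype.val_injective
      _ ≤ (k : ℝ)⁻¹ :=
          tsum_inv_sq_le_of_forall_lt hk (s := {p | p.Prime ∧ k < p}) fun _ ↦ And.right
  calc _ ≤ Real.exp (2 * ∑' p : {p : ℕ // p.Prime ∧ k < p}, 1 / ((p : ℕ) : ℝ) ^ t) :=
        Real.tprod_inv_one_sub_le_exp (fun _ ↦ by positivity)
          (fun p ↦ (hle_sq p p.2.1).trans (hsq_le p p.2.1)) hsum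
    _ ≤ Real.exp (2 / k) := by
      rw [Real.exp_le_exp, div_eq_mul_inv]
      linarith

theorem tail_euler_product_le (t n : ℕ) (ht : 2 ≤ t) (hn : 2 ≤ n) :
    ∏' p : {p : ℕ // p.Prime ∧ nthPrime n < p}, (1 - 1 / ((p : ℕ) : ℝ) ^ t)⁻¹ ≤
      Real.exp (2 / (nthPrime n : ℝ)) :=
  tail_euler_product_le_general t n ht
end
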